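/- Let a ∈ (0,1) and define t₂(β) = (2/√(1+β²))·(π − arcsin√((1−a²)(1+β²))) for β ∈ [−a/√(1−a²), a/√(1−a²)]. Then: (1) t₂ is an even function; (2) t₂ is strictly decreasing on [0, a/√(1−a²)] and strictly increasing on [−a/√(1−a²), 0]; (3) the range of t₂ is the segment [π·√(1−a²), 2(π − arcsin√(1−a²))]. -/

import Mathlib

/-!
`t₂ a` depends on `β` only through `β²`, so it is even. For `β ≥ 0` it is the product of
`2 / √(1 + β²)`, which is positive and strictly decreasing, and `π - arcsin √((1 - a²)(1 + β²))`,
which is positive (`arcsin ≤ π / 2`) and non-increasing; hence `t₂ a` is strictly decreasing on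
`[0, ∞)`. At `β = a / √(1 - a²)` the argument of the arcsine is `1`, which gives the value
`π √(1 - a²)`, and the range follows from the intermediate value theorem and evenness.
-/

open Real Set

/-- The candidate sub-Riemannian distance `t₂(β)` in the long-time case. -/
noncomputable def t₂ (a β : ℝ) : ℝ :=
  2 / Real.sqrt (1 + β^2) * (Real.pi - Real.arcsin (Real.sqrt ((1 - a^2) * (1 + β^2))))

theorem Function.Even.image_Icc_neg {α β : Type*} [AddCommGroup α] [LinearOrder α]
    [IsOrderedAddMonoid α] {f : α → β} (hf : Function.Even f) {m : α} (hm : 0 ≤ m) :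
    f '' Icc (-m) m = f '' Icc 0 m := by
  have hneg : f '' Icc (-m) 0 = f '' Icc 0 m := by
    rw [← neg_zero, ← neg_Icc, ← image_neg_eq_neg, image_image, neg_zero]
    exact image_congr fun x _ => hf x
  rw [← Icc_union_Icc_eq_Icc (neg_nonpos.2 hm) hm, image_union, hneg, union_self]

namespace t₂

variable {a : ℝ}

theorem even (a : ℝ) : Function.Even (t₂ a) := fun β => by
  simp only [t₂, neg_sq]

theorem continuous (a : ℝ) : Continuous (t₂ a) := by
  unfold t₂
  fun_prop (disch := intro; positivity)

theorem strictAntiOn_Ici (ha : a ^ 2 ≤ 1) : StrictAntiOn (t₂ a) (Ici 0) := by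
  intro β₁ (hβ₁ : 0 ≤ β₁) β₂ _ hlt
  have hsq : 1 + β₁ ^ 2 < 1 + β₂ ^ 2 := by nlinarith
  have hfactor : 2 / √(1 + β₂ ^ 2) < 2 / √(1 + β₁ ^ 2) :=
    div_lt_div_of_pos_left two_pos (by positivity) (sqrt_lt_sqrt (by positivity) hsq)
  have harcsin : arcsin √((1 - a ^ 2) * (1 + β₁ ^ 2)) ≤ arcsin √((1 - a ^ 2) * (1 + β₂ ^ 2)) :=
    arcsin_le_arcsin (sqrt_le_sqrt (mul_le_mul_of_nonneg_left hsq.le (by linarith)))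
  have hpos : 0 < π - arcsin √((1 - a ^ 2) * (1 + β₂ ^ 2)) := by
    linarith [arcsin_le_pi_div_two √((1 - a ^ 2) * (1 + β₂ ^ 2)), pi_pos]
  exact mul_lt_mul hfactor (by linarith) hpos (by positivity)

theorem strictMonoOn_Iic (ha : a ^ 2 ≤ 1) : StrictMonoOn (t₂ a) (Iic 0) := by
  intro β₁ (hβ₁ : β₁ ≤ 0) β₂ (hβ₂ : β₂ ≤ 0) hlt
  rw [← even a β₁, ← even a β₂]
  exact strictAntiOn_Ici ha (neg_nonneg.2 hβ₂) (neg_nonneg.2 hβ₁) (neg_lt_neg hlt)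

theorem apply_zero (a : ℝ) : t₂ a 0 = 2 * (π - arcsin √(1 - a ^ 2)) := by
  simp [t₂]

theorem apply_endpoint (ha : a ^ 2 < 1) : t₂ a (a / √(1 - a ^ 2)) = π * √(1 - a ^ 2) := by
  have hc : 0 < √(1 - a ^ 2) := sqrt_pos.2 (by linarith)
  have hc2 : √(1 - a ^ 2) ^ 2 = 1 - a ^ 2 := sq_sqrt (by linarith)
  have hsum : 1 + (a / √(1 - a ^ 2)) ^ 2 = (1 / √(1 - a ^ 2)) ^ 2 := by
    field_simp
    linarith
  have harg : (1 - a ^ 2) * (1 / √(1 - a ^ 2)) ^ 2 = 1 := by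
    rw [div_pow, one_pow, hc2, mul_one_div_cancel (sub_pos.2 ha).ne']
  rw [t₂, hsum, harg, sqrt_sq (by positivity), sqrt_one, arcsin_one]
  field_simp
  ring

end t₂

/-- The function `t₂` is even, strictly decreasing on `[0, a/√(1−a²)]`, strictly increasing
on `[−a/√(1−a²), 0]`, and its range is `[π √(1−a²), 2(π − arcsin √(1−a²))]`. -/
theorem t₂_properties (a : ℝ) (ha : a ∈ Set.Ioo (0:ℝ) 1) :
    (∀ β : ℝ, t₂ a (-β) = t₂ a β) ∧
    StrictAntiOn (t₂ a) (Set.Icc 0 (a / Real.sqrt (1 - a^2))) ∧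
    StrictMonoOn (t₂ a) (Set.Icc (-(a / Real.sqrt (1 - a^2))) 0) ∧
    t₂ a '' Set.Icc (-(a / Real.sqrt (1 - a^2))) (a / Real.sqrt (1 - a^2)) =
      Set.Icc (Real.pi * Real.sqrt (1 - a^2))
        (2 * (Real.pi - Real.arcsin (Real.sqrt (1 - a^2)))) := by
  obtain ⟨ha0, ha1⟩ := ha
  have ha2 : a ^ 2 < 1 := by nlinarith
  have hm : 0 ≤ a / √(1 - a ^ 2) := by positivity
  have hanti : StrictAntiOn (t₂ a) (Icc 0 (a / √(1 - a ^ 2))) :=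
    (t₂.strictAntiOn_Ici ha2.le).mono Icc_subset_Ici_self
  refine ⟨t₂.even a, hanti, (t₂.strictMonoOn_Iic ha2.le).mono Icc_subset_Iic_self, ?_⟩
  rw [(t₂.even a).image_Icc_neg hm,
    (t₂.continuous a).continuousOn.image_Icc_of_antitoneOn hm hanti.antitoneOn,
    t₂.apply_endpoint ha2, t₂.apply_zero]
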